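/- arXiv:2105.09629 — 4 statements merged into one kernel-verified Lean document; each statement's English description precedes it below -/
import Mathlib

section
/- For an invertible n×n matrix M, the *_M-product is associative: (A *_M B) *_M C = A *_M (B *_M C) for tensors A ∈ ℝ^{l×p×n}, B ∈ ℝ^{p×q×n}, C ∈ ℝ^{q×m×n}. -/
open scoped BigOperators

noncomputable section

/-- Mode-3 product: apply matrix `M` to the tube fibers of `A`. -/
def mode3 {l p n q : ℕ} (A : Fin l → Fin p → Fin n → ℝ)
    (M : Matrix (Fin q) (Fin n) ℝ) : Fin l → Fin p → Fin q → ℝ :=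
  fun i j k => ∑ t, A i j t * M k t

/-- Facewise product: multiply corresponding frontal slices. -/
def face {l p m n : ℕ} (A : Fin l → Fin p → Fin n → ℝ)
    (B : Fin p → Fin m → Fin n → ℝ) : Fin l → Fin m → Fin n → ℝ :=
  fun i j k => ∑ t, A i t k * B t j k

/-- The `*_M` product: `A *_M B = ((A ×₃ M) △ (B ×₃ M)) ×₃ M⁻¹`. -/
def tprodM {l p m n : ℕ} (M : Matrix (Fin n) (Fin n) ℝ)
    (A : Fin l → Fin p → Fin n → ℝ) (B : Fin p → Fin m → Fin n → ℝ) :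
    Fin l → Fin m → Fin n → ℝ :=
  mode3 (face (mode3 A M) (mode3 B M)) M⁻¹


lemma mode3_mode3 {l p n q r : ℕ} (A : Fin l → Fin p → Fin n → ℝ)
    (N : Matrix (Fin q) (Fin n) ℝ) (M : Matrix (Fin r) (Fin q) ℝ) :
    mode3 (mode3 A N) M = mode3 A (M * N) := by
  funext i j k
  simp only [mode3, Matrix.mul_apply, Finset.sum_mul, Finset.mul_sum]
  rw [Finset.sum_comm]
  congr 1; ext s; congr 1; ext t; ring

lemma mode3_one {l p n : ℕ} (A : Fin l → Fin p → Fin n → ℝ) :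
    mode3 A (1 : Matrix (Fin n) (Fin n) ℝ) = A := by
  funext i j k
  simp [mode3, Matrix.one_apply, mul_comm]

lemma mode3_inv_cancel {l p n : ℕ} (M : Matrix (Fin n) (Fin n) ℝ)
    (hM : IsUnit M) (A : Fin l → Fin p → Fin n → ℝ) :
    mode3 (mode3 A M⁻¹) M = A := by
  rw [mode3_mode3, Matrix.mul_nonsing_inv _ ((Matrix.isUnit_iff_isUnit_det M).mp hM), mode3_one]

lemma face_assoc {l p q m n : ℕ} (A : Fin l → Fin p → Fin n → ℝ)
    (B : Fin p → Fin q → Fin n → ℝ) (C : Fin q → Fin m → Fin n → ℝ) :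
    face (face A B) C = face A (face B C) := by
  funext i j k
  simp only [face, Finset.sum_mul, Finset.mul_sum]
  rw [Finset.sum_comm]
  congr 1; ext s; congr 1; ext t; ring

theorem tprod_assoc {l p q m n : ℕ} (M : Matrix (Fin n) (Fin n) ℝ)
    (hM : IsUnit M)
    (A : Fin l → Fin p → Fin n → ℝ) (B : Fin p → Fin q → Fin n → ℝ)
    (C : Fin q → Fin m → Fin n → ℝ) :
    tprodM M (tprodM M A B) C = tprodM M A (tprodM M B C) := by
  unfold tprodM
  rw [mode3_inv_cancel M hM, mode3_inv_cancel M hM, face_assoc]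
end
end

section
/- If M is a nonzero multiple of an orthogonal matrix, say M M^T = c I with c ≠ 0, then M^{-1} = (1/c) M^T, and the back-propagation gradient formula holds: for a differentiable scalar function f on ℝ^{l×m×n} and fixed A ∈ ℝ^{l×p×n}, the gradient of B ↦ f(A *_M B) is A^T *_M ∇f(A *_M B), where ∇f is the tensor of partial derivatives. -/
open scoped BigOperators
open Matrix

noncomputable section

/-- Tensor transpose: transpose each frontal slice. -/
def ttrans {l p n : ℕ} (A : Fin l → Fin p → Fin n → ℝ) :
    Fin p → Fin l → Fin n → ℝ :=
  fun i j k => A j i k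

/-- `B ↦ A *_M B` as a linear map. -/
def tprodMLin {l p m n : ℕ} (M : Matrix (Fin n) (Fin n) ℝ)
    (A : Fin l → Fin p → Fin n → ℝ) :
    (Fin p → Fin m → Fin n → ℝ) →ₗ[ℝ] (Fin l → Fin m → Fin n → ℝ) where
  toFun := tprodM M A
  map_add' B B' := by
    funext i j k
    simp [tprodM, mode3, face, Pi.add_apply, add_mul, mul_add,
      Finset.sum_add_distrib]
  map_smul' r B := by
    funext i j k
    simp only [tprodM, mode3, face, Pi.smul_apply, smul_eq_mul, RingHom.id_apply,
      Finset.mul_sum, Finset.sum_mul]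
    refine Finset.sum_congr rfl fun _ _ => ?_
    refine Finset.sum_congr rfl fun _ _ => ?_
    refine Finset.sum_congr rfl fun _ _ => ?_
    refine Finset.sum_congr rfl fun _ _ => ?_
    ring

/-- The adjoint identity for `*_M` when `M⁻¹ = c⁻¹ Mᵀ`. -/
lemma tprodM_adjoint {l p m n : ℕ} (M : Matrix (Fin n) (Fin n) ℝ) (c : ℝ)
    (hMinv : ∀ k k', M⁻¹ k k' = c⁻¹ * M k' k)
    (A : Fin l → Fin p → Fin n → ℝ)
    (G : Fin l → Fin m → Fin n → ℝ) (H : Fin p → Fin m → Fin n → ℝ) :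
    ∑ i, ∑ j, ∑ k, G i j k * tprodM M A H i j k
    = ∑ r, ∑ s, ∑ k, tprodM M (ttrans A) G r s k * H r s k := by
  simp only [tprodM, mode3, face, ttrans, hMinv, Finset.mul_sum, Finset.sum_mul]
  simp only [← Fintype.sum_prod_type']
  refine Fintype.sum_equiv
    ⟨fun x => (x.2.2.2.2.1, x.2.1, x.2.2.2.2.2.1, x.2.2.2.1, x.1, x.2.2.1, x.2.2.2.2.2.2),
     fun y => (y.2.2.2.2.1, y.2.1, y.2.2.2.2.2.1, y.2.2.2.1, y.1, y.2.2.1, y.2.2.2.2.2.2),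
     fun x => rfl, fun y => rfl⟩ _ _ fun x => ?_
  dsimp
  ring

theorem backprop_tprodM {l p m n : ℕ} (M : Matrix (Fin n) (Fin n) ℝ) (c : ℝ) (hc : c ≠ 0)
    (hM : M * Mᵀ = c • (1 : Matrix (Fin n) (Fin n) ℝ))
    (A : Fin l → Fin p → Fin n → ℝ)
    (f : (Fin l → Fin m → Fin n → ℝ) → ℝ)
    (G : (Fin l → Fin m → Fin n → ℝ) → (Fin l → Fin m → Fin n → ℝ))
    (hf : Differentiable ℝ f)
    (hG : ∀ X H, fderiv ℝ f X H = ∑ i, ∑ j, ∑ k, G X i j k * H i j k) :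
    M⁻¹ = c⁻¹ • Mᵀ ∧
    ∀ (B H : Fin p → Fin m → Fin n → ℝ),
      fderiv ℝ (fun B => f (tprodM M A B)) B H =
        ∑ r, ∑ s, ∑ k, tprodM M (ttrans A) (G (tprodM M A B)) r s k * H r s k := by
  have hinv : M⁻¹ = c⁻¹ • Mᵀ := by
    apply Matrix.inv_eq_right_inv
    rw [Matrix.mul_smul, hM, smul_smul, inv_mul_cancel₀ hc, one_smul]
  have hMinv : ∀ k k', M⁻¹ k k' = c⁻¹ * M k' k := by
    intro k k'
    rw [hinv]
    simp [Matrix.smul_apply, Matrix.transpose_apply, smul_eq_mul]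
  refine ⟨hinv, fun B H => ?_⟩
  set L : (Fin p → Fin m → Fin n → ℝ) →L[ℝ] (Fin l → Fin m → Fin n → ℝ) :=
    (tprodMLin M A).toContinuousLinearMap with hL
  have hfun : (fun B => f (tprodM M A B)) = fun B => f (L B) := rfl
  have hD : HasFDerivAt (fun B => f (L B)) ((fderiv ℝ f (L B)).comp L) B :=
    (hf (L B)).hasFDerivAt.comp B L.hasFDerivAt
  rw [hfun, hD.fderiv]
  have : (fderiv ℝ f (L B)).comp L H = fderiv ℝ f (tprodM M A B) (tprodM M A H) := rfl
  rw [this, hG]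
  exact tprodM_adjoint M c hMinv A (G (tprodM M A B)) H
end
end

section
/- For the bilinear pooling layer X = U^T *_M V with M a nonzero multiple of an orthogonal matrix, the gradients of a differentiable scalar loss E with respect to U and V satisfy δU = V *_M (δX)^T and δV = U *_M (δX)^T, where δX denotes the gradient of E with respect to X. -/
open scoped BigOperators
open Matrix

noncomputable section

/-- The map `U ↦ Uᵀ *_M V` as a linear map. -/
def tprodL1 {l p m n : ℕ} (M : Matrix (Fin n) (Fin n) ℝ) (V : Fin p → Fin m → Fin n → ℝ) :
    (Fin p → Fin l → Fin n → ℝ) →ₗ[ℝ] (Fin l → Fin m → Fin n → ℝ) where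
  toFun U := tprodM M (ttrans U) V
  map_add' U U' := by
    funext i j k
    simp [tprodM, mode3, face, ttrans, add_mul, mul_add, Finset.sum_add_distrib]
  map_smul' r U := by
    funext i j k
    simp only [tprodM, mode3, face, ttrans, Pi.smul_apply, smul_eq_mul, RingHom.id_apply]
    rw [Finset.mul_sum]
    refine Finset.sum_congr rfl fun s _ => ?_
    rw [← mul_assoc, Finset.mul_sum]
    refine congrArg (· * M⁻¹ k s) ?_
    refine Finset.sum_congr rfl fun t _ => ?_
    simp only [Finset.mul_sum, Finset.sum_mul]
    exact Finset.sum_congr rfl fun _ _ => Finset.sum_congr rfl fun _ _ => by ring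

/-- The map `V ↦ Uᵀ *_M V` as a linear map. -/
def tprodL2 {l p m n : ℕ} (M : Matrix (Fin n) (Fin n) ℝ) (U : Fin p → Fin l → Fin n → ℝ) :
    (Fin p → Fin m → Fin n → ℝ) →ₗ[ℝ] (Fin l → Fin m → Fin n → ℝ) where
  toFun V := tprodM M (ttrans U) V
  map_add' V V' := by
    funext i j k
    simp [tprodM, mode3, face, ttrans, add_mul, mul_add, Finset.sum_add_distrib]
  map_smul' r V := by
    funext i j k
    simp only [tprodM, mode3, face, ttrans, Pi.smul_apply, smul_eq_mul, RingHom.id_apply]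
    rw [Finset.mul_sum]
    refine Finset.sum_congr rfl fun s _ => ?_
    rw [← mul_assoc, Finset.mul_sum]
    refine congrArg (· * M⁻¹ k s) ?_
    refine Finset.sum_congr rfl fun t _ => ?_
    simp only [Finset.mul_sum, Finset.sum_mul]
    exact Finset.sum_congr rfl fun _ _ => Finset.sum_congr rfl fun _ _ => by ring

lemma tprod_key1 {l p m n : ℕ} (M : Matrix (Fin n) (Fin n) ℝ) (c : ℝ)
    (hMinv : M⁻¹ = c⁻¹ • Mᵀ)
    (G : Fin l → Fin m → Fin n → ℝ) (V : Fin p → Fin m → Fin n → ℝ)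
    (H : Fin p → Fin l → Fin n → ℝ) :
    ∑ i, ∑ j, ∑ k, G i j k * tprodM M (ttrans H) V i j k
    = ∑ i, ∑ j, ∑ k, tprodM M V (ttrans G) i j k * H i j k := by
  set F : Fin l × Fin m × Fin n × Fin n × Fin p × Fin n × Fin n → ℝ :=
    fun y =>
      c⁻¹ * (G y.1 y.2.1 y.2.2.1 * M y.2.2.2.1 y.2.2.1 *
        (H y.2.2.2.2.1 y.1 y.2.2.2.2.2.2 * M y.2.2.2.1 y.2.2.2.2.2.2) *
        (V y.2.2.2.2.1 y.2.1 y.2.2.2.2.2.1 * M y.2.2.2.1 y.2.2.2.2.2.1)) with hF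
  have hL : (∑ i, ∑ j, ∑ k, G i j k * tprodM M (ttrans H) V i j k) = ∑ x, F x := by
    simp only [hF, tprodM, mode3, face, ttrans, hMinv, Matrix.smul_apply,
      Matrix.transpose_apply, smul_eq_mul, Finset.mul_sum, Finset.sum_mul,
      Fintype.sum_prod_type]
    refine Finset.sum_congr rfl fun _ _ => Finset.sum_congr rfl fun _ _ =>
      Finset.sum_congr rfl fun _ _ => Finset.sum_congr rfl fun _ _ =>
      Finset.sum_congr rfl fun _ _ => Finset.sum_congr rfl fun _ _ =>
      Finset.sum_congr rfl fun _ _ => by ring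
  have hR : (∑ i, ∑ j, ∑ k, tprodM M V (ttrans G) i j k * H i j k)
      = ∑ x : Fin p × Fin l × Fin n × Fin n × Fin m × Fin n × Fin n,
          F (x.2.1, x.2.2.2.2.1, x.2.2.2.2.2.1, x.2.2.2.1, x.1, x.2.2.2.2.2.2, x.2.2.1) := by
    simp only [hF, tprodM, mode3, face, ttrans, hMinv, Matrix.smul_apply,
      Matrix.transpose_apply, smul_eq_mul, Finset.mul_sum, Finset.sum_mul,
      Fintype.sum_prod_type]
    refine Finset.sum_congr rfl fun _ _ => Finset.sum_congr rfl fun _ _ =>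
      Finset.sum_congr rfl fun _ _ => Finset.sum_congr rfl fun _ _ =>
      Finset.sum_congr rfl fun _ _ => Finset.sum_congr rfl fun _ _ =>
      Finset.sum_congr rfl fun _ _ => by ring
  rw [hL, hR]
  exact (Fintype.sum_bijective
    (fun x : Fin p × Fin l × Fin n × Fin n × Fin m × Fin n × Fin n =>
      ((x.2.1, x.2.2.2.2.1, x.2.2.2.2.2.1, x.2.2.2.1, x.1, x.2.2.2.2.2.2, x.2.2.1) :
        Fin l × Fin m × Fin n × Fin n × Fin p × Fin n × Fin n))
    (Equiv.mk
      (fun x : Fin p × Fin l × Fin n × Fin n × Fin m × Fin n × Fin n =>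
        ((x.2.1, x.2.2.2.2.1, x.2.2.2.2.2.1, x.2.2.2.1, x.1, x.2.2.2.2.2.2, x.2.2.1) :
          Fin l × Fin m × Fin n × Fin n × Fin p × Fin n × Fin n))
      (fun y => (y.2.2.2.2.1, y.1, y.2.2.2.2.2.2, y.2.2.2.1, y.2.1, y.2.2.1, y.2.2.2.2.2.1))
      (fun _ => rfl) (fun _ => rfl)).bijective
    _ F (fun _ => rfl)).symm

lemma tprod_key2 {l p m n : ℕ} (M : Matrix (Fin n) (Fin n) ℝ) (c : ℝ)
    (hMinv : M⁻¹ = c⁻¹ • Mᵀ)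
    (G : Fin l → Fin m → Fin n → ℝ) (U : Fin p → Fin l → Fin n → ℝ)
    (H : Fin p → Fin m → Fin n → ℝ) :
    ∑ i, ∑ j, ∑ k, G i j k * tprodM M (ttrans U) H i j k
    = ∑ i, ∑ j, ∑ k, tprodM M U G i j k * H i j k := by
  set F : Fin l × Fin m × Fin n × Fin n × Fin p × Fin n × Fin n → ℝ :=
    fun y =>
      c⁻¹ * (G y.1 y.2.1 y.2.2.1 * M y.2.2.2.1 y.2.2.1 *
        (U y.2.2.2.2.1 y.1 y.2.2.2.2.2.2 * M y.2.2.2.1 y.2.2.2.2.2.2) *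
        (H y.2.2.2.2.1 y.2.1 y.2.2.2.2.2.1 * M y.2.2.2.1 y.2.2.2.2.2.1)) with hF
  have hL : (∑ i, ∑ j, ∑ k, G i j k * tprodM M (ttrans U) H i j k) = ∑ x, F x := by
    simp only [hF, tprodM, mode3, face, ttrans, hMinv, Matrix.smul_apply,
      Matrix.transpose_apply, smul_eq_mul, Finset.mul_sum, Finset.sum_mul,
      Fintype.sum_prod_type]
    refine Finset.sum_congr rfl fun _ _ => Finset.sum_congr rfl fun _ _ =>
      Finset.sum_congr rfl fun _ _ => Finset.sum_congr rfl fun _ _ =>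
      Finset.sum_congr rfl fun _ _ => Finset.sum_congr rfl fun _ _ =>
      Finset.sum_congr rfl fun _ _ => by ring
  have hR : (∑ i, ∑ j, ∑ k, tprodM M U G i j k * H i j k)
      = ∑ x : Fin p × Fin m × Fin n × Fin n × Fin l × Fin n × Fin n,
          F (x.2.2.2.2.1, x.2.1, x.2.2.2.2.2.1, x.2.2.2.1, x.1, x.2.2.1, x.2.2.2.2.2.2) := by
    simp only [hF, tprodM, mode3, face, ttrans, hMinv, Matrix.smul_apply,
      Matrix.transpose_apply, smul_eq_mul, Finset.mul_sum, Finset.sum_mul,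
      Fintype.sum_prod_type]
    refine Finset.sum_congr rfl fun _ _ => Finset.sum_congr rfl fun _ _ =>
      Finset.sum_congr rfl fun _ _ => Finset.sum_congr rfl fun _ _ =>
      Finset.sum_congr rfl fun _ _ => Finset.sum_congr rfl fun _ _ =>
      Finset.sum_congr rfl fun _ _ => by ring
  rw [hL, hR]
  exact (Fintype.sum_bijective
    (fun x : Fin p × Fin m × Fin n × Fin n × Fin l × Fin n × Fin n =>
      ((x.2.2.2.2.1, x.2.1, x.2.2.2.2.2.1, x.2.2.2.1, x.1, x.2.2.1, x.2.2.2.2.2.2) :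
        Fin l × Fin m × Fin n × Fin n × Fin p × Fin n × Fin n))
    (Equiv.mk
      (fun x : Fin p × Fin m × Fin n × Fin n × Fin l × Fin n × Fin n =>
        ((x.2.2.2.2.1, x.2.1, x.2.2.2.2.2.1, x.2.2.2.1, x.1, x.2.2.1, x.2.2.2.2.2.2) :
          Fin l × Fin m × Fin n × Fin n × Fin p × Fin n × Fin n))
      (fun y => (y.2.2.2.2.1, y.2.1, y.2.2.2.2.2.1, y.2.2.2.1, y.1, y.2.2.1, y.2.2.2.2.2.2))
      (fun _ => rfl) (fun _ => rfl)).bijective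
    _ F (fun _ => rfl)).symm

/-- Gradients of a scalar loss through the bilinear pooling layer `X = Uᵀ *_M V`:
`δU = V *_M (δX)ᵀ` and `δV = U *_M δX`. -/
theorem bilinear_pooling_gradients {l p m n : ℕ} (M : Matrix (Fin n) (Fin n) ℝ)
    (c : ℝ) (hc : c ≠ 0) (hM : M * Mᵀ = c • (1 : Matrix (Fin n) (Fin n) ℝ))
    (E : (Fin l → Fin m → Fin n → ℝ) → ℝ)
    (G : (Fin l → Fin m → Fin n → ℝ) → (Fin l → Fin m → Fin n → ℝ))
    (hE : Differentiable ℝ E)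
    (hG : ∀ X H, fderiv ℝ E X H = ∑ i, ∑ j, ∑ k, G X i j k * H i j k)
    (U : Fin p → Fin l → Fin n → ℝ) (V : Fin p → Fin m → Fin n → ℝ) :
    (∀ H : Fin p → Fin l → Fin n → ℝ,
      fderiv ℝ (fun U => E (tprodM M (ttrans U) V)) U H =
        ∑ i, ∑ j, ∑ k,
          tprodM M V (ttrans (G (tprodM M (ttrans U) V))) i j k * H i j k) ∧
    (∀ H : Fin p → Fin m → Fin n → ℝ,
      fderiv ℝ (fun V => E (tprodM M (ttrans U) V)) V H =
        ∑ i, ∑ j, ∑ k,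
          tprodM M U (G (tprodM M (ttrans U) V)) i j k * H i j k) := by
  have hMinv : M⁻¹ = c⁻¹ • Mᵀ := by
    apply Matrix.inv_eq_right_inv
    rw [Matrix.mul_smul, hM, smul_smul, inv_mul_cancel₀ hc, one_smul]
  constructor
  · intro H
    set f := (tprodL1 (l := l) M V).toContinuousLinearMap with hfdef
    have hco : ⇑f = fun U : Fin p → Fin l → Fin n → ℝ => tprodM M (ttrans U) V := by
      funext U; rfl
    have h1 : (fun U : Fin p → Fin l → Fin n → ℝ => E (tprodM M (ttrans U) V))
        = E ∘ f := by rw [hco]; rfl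
    rw [h1, fderiv_comp _ (hE _) f.differentiableAt, f.fderiv]
    have : f U = tprodM M (ttrans U) V := congrFun hco U
    simp only [ContinuousLinearMap.coe_comp', Function.comp_apply, this,
      congrFun hco H, hG]
    exact tprod_key1 M c hMinv _ V H
  · intro H
    set f := (tprodL2 (m := m) M U).toContinuousLinearMap with hfdef
    have hco : ⇑f = fun V : Fin p → Fin m → Fin n → ℝ => tprodM M (ttrans U) V := by
      funext V; rfl
    have h1 : (fun V : Fin p → Fin m → Fin n → ℝ => E (tprodM M (ttrans U) V))
        = E ∘ f := by rw [hco]; rfl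
    rw [h1, fderiv_comp _ (hE _) f.differentiableAt, f.fderiv]
    have : f V = tprodM M (ttrans U) V := congrFun hco V
    simp only [ContinuousLinearMap.coe_comp', Function.comp_apply, this,
      congrFun hco H, hG]
    exact tprod_key2 M c hMinv _ U H
end
end

section
/- For an affine layer Z = W *_M U + B·1^T followed by an entrywise differentiable activation σ with output U' = σ(Z), and M a nonzero multiple of an orthogonal matrix, the gradient of a scalar loss E with respect to U satisfies δU = W^T *_M (σ'(Z) ⊙ δU'), where ⊙ is the Hadamard product, σ' is applied entrywise, and δU' is the gradient of E with respect to U'. -/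
/-!
By the chain rule, the derivative of `U ↦ σ(W *_M U + B)` in the direction `H` is
`σ'(Z) ⊙ (W *_M H)`, and the Hadamard factor `σ'(Z)` moves across the Frobenius pairing with
`δU'`. What remains is that `H ↦ Wᵀ *_M H` is the adjoint of `H ↦ W *_M H`. The mode-3 product
with `N` has adjoint the mode-3 product with `Nᵀ`, and the facewise product with `A` has adjoint
the facewise product with `Aᵀ`. Since `M⁻¹ = c⁻¹ Mᵀ`, the adjoint of `×₃ M⁻¹` is `c⁻¹ (×₃ M)` and
the adjoint of `×₃ M` is `c (×₃ M⁻¹)`, and the two scalars cancel.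
-/

open scoped BigOperators
open Matrix

noncomputable section

section TensorAlgebra

variable {ι κ μ : Type*} [Fintype ι] [Fintype κ] [Fintype μ]

def tinner (X Y : ι → κ → μ → ℝ) : ℝ :=
  ∑ i, ∑ j, ∑ k, X i j k * Y i j k

lemma tinner_smul_left (a : ℝ) (X Y : ι → κ → μ → ℝ) :
    tinner (a • X) Y = a * tinner X Y := by
  simp only [tinner, Pi.smul_apply, smul_eq_mul, Finset.mul_sum, mul_assoc]

def thadamard (A X : ι → κ → μ → ℝ) : ι → κ → μ → ℝ :=
  fun i j k => A i j k * X i j k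

lemma tinner_thadamard_right (A X Y : ι → κ → μ → ℝ) :
    tinner X (thadamard A Y) = tinner (thadamard A X) Y := by
  simp only [tinner, thadamard, mul_left_comm, mul_assoc]

def thadamardCLM (A : ι → κ → μ → ℝ) : (ι → κ → μ → ℝ) →L[ℝ] (ι → κ → μ → ℝ) :=
  LinearMap.toContinuousLinearMap
    { toFun := thadamard A
      map_add' := fun X Y => by funext i j k; simp only [thadamard, Pi.add_apply, mul_add]
      map_smul' := fun a X => by
        funext i j k; simp only [thadamard, Pi.smul_apply, smul_eq_mul, RingHom.id_apply]; ring }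

@[simp] lemma thadamardCLM_apply (A X : ι → κ → μ → ℝ) : thadamardCLM A X = thadamard A X := rfl

lemma hasFDerivAt_entrywise {σ σ' : ℝ → ℝ} (hσ : ∀ t, HasDerivAt σ (σ' t) t)
    (X : ι → κ → μ → ℝ) :
    HasFDerivAt (fun X i j k => σ (X i j k))
      (thadamardCLM fun i j k => σ' (X i j k)) X := by
  refine hasFDerivAt_pi'' fun i => hasFDerivAt_pi'' fun j => hasFDerivAt_pi'' fun k => ?_
  have heval := (hasFDerivAt_apply (𝕜 := ℝ) k (X i j)).comp X
    ((hasFDerivAt_apply (𝕜 := ℝ) j (X i)).comp X (hasFDerivAt_apply (𝕜 := ℝ) i X))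
  refine ((hσ (X i j k)).comp_hasFDerivAt X heval).congr_fderiv ?_
  ext Y
  simp [thadamard]

end TensorAlgebra

lemma inv_eq_inv_smul_transpose {n K : Type*} [Fintype n] [DecidableEq n] [Field K]
    {M : Matrix n n K} {c : K} (hc : c ≠ 0) (hM : M * Mᵀ = c • 1) : M⁻¹ = c⁻¹ • Mᵀ :=
  Matrix.inv_eq_right_inv <| by rw [Matrix.mul_smul, hM, smul_smul, inv_mul_cancel₀ hc, one_smul]

section TProdM

variable {l p m n q : ℕ}

lemma tinner_mode3 (X : Fin l → Fin p → Fin q → ℝ) (Y : Fin l → Fin p → Fin n → ℝ)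
    (N : Matrix (Fin q) (Fin n) ℝ) :
    tinner X (mode3 Y N) = tinner (mode3 X Nᵀ) Y := by
  simp only [tinner, mode3, Matrix.transpose_apply, Finset.mul_sum, Finset.sum_mul]
  refine Finset.sum_congr rfl fun i _ => Finset.sum_congr rfl fun j _ => ?_
  rw [Finset.sum_comm]
  simp only [mul_comm, mul_left_comm]

lemma mode3_smul_right (X : Fin l → Fin p → Fin n → ℝ) (a : ℝ)
    (N : Matrix (Fin q) (Fin n) ℝ) : mode3 X (a • N) = a • mode3 X N := by
  funext i j k
  simp only [mode3, Matrix.smul_apply, Pi.smul_apply, smul_eq_mul, Finset.mul_sum]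
  exact Finset.sum_congr rfl fun _ _ => by ring

lemma tinner_face (A : Fin l → Fin p → Fin n → ℝ) (D : Fin l → Fin m → Fin n → ℝ)
    (H : Fin p → Fin m → Fin n → ℝ) :
    tinner D (face A H) = tinner (face (ttrans A) D) H := by
  calc tinner D (face A H)
      = ∑ i, ∑ t, ∑ j, ∑ k, A i t k * D i j k * H t j k := by
        simp only [tinner, face, Finset.mul_sum]
        refine Finset.sum_congr rfl fun i _ => ?_
        rw [Finset.sum_comm_cycle]
        simp only [mul_left_comm, mul_assoc]
    _ = tinner (face (ttrans A) D) H := by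
        simp only [tinner, face, ttrans, Finset.sum_mul]
        rw [Finset.sum_comm]
        exact Finset.sum_congr rfl fun t _ => Finset.sum_comm_cycle.symm

lemma tinner_tprodM {M : Matrix (Fin n) (Fin n) ℝ} {c : ℝ} (hc : c ≠ 0) (hM : M * Mᵀ = c • 1)
    (A : Fin l → Fin p → Fin n → ℝ) (D : Fin l → Fin m → Fin n → ℝ)
    (H : Fin p → Fin m → Fin n → ℝ) :
    tinner D (tprodM M A H) = tinner (tprodM M (ttrans A) D) H := by
  have hinv := inv_eq_inv_smul_transpose hc hM
  have hinvT : M⁻¹ᵀ = c⁻¹ • M := by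
    rw [hinv, Matrix.transpose_smul, Matrix.transpose_transpose]
  calc tinner D (tprodM M A H)
      = c⁻¹ * tinner (mode3 D M) (face (mode3 A M) (mode3 H M)) := by
        rw [tprodM, tinner_mode3, hinvT, mode3_smul_right, tinner_smul_left]
    _ = c⁻¹ * tinner (mode3 (face (ttrans (mode3 A M)) (mode3 D M)) Mᵀ) H := by
        rw [tinner_face, tinner_mode3]
    _ = tinner (tprodM M (ttrans A) D) H := by
        rw [tprodM, hinv, mode3_smul_right, tinner_smul_left]
        rfl

def tprodMCLM (M : Matrix (Fin n) (Fin n) ℝ) (A : Fin l → Fin p → Fin n → ℝ) :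
    (Fin p → Fin m → Fin n → ℝ) →L[ℝ] (Fin l → Fin m → Fin n → ℝ) :=
  LinearMap.toContinuousLinearMap
    { toFun := tprodM M A
      map_add' := fun X Y => by
        funext i j k
        simp only [tprodM, mode3, face, Pi.add_apply, add_mul, mul_add, Finset.sum_add_distrib]
      map_smul' := fun a X => by
        funext i j k
        simp only [tprodM, mode3, face, Pi.smul_apply, smul_eq_mul, RingHom.id_apply,
          Finset.mul_sum, Finset.sum_mul]
        simp only [mul_left_comm, mul_assoc] }

end TProdM

/-- Back-propagation through an affine layer followed by an entrywise activation:
for `Z = W *_M U + B·1ᵀ` and `U' = σ(Z)`, the gradient of the loss with respect to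
`U` is `Wᵀ *_M (σ'(Z) ⊙ δU')`. -/
theorem mlp_input_gradient {m p q n : ℕ} (M : Matrix (Fin n) (Fin n) ℝ)
    (c : ℝ) (hc : c ≠ 0) (hM : M * Mᵀ = c • (1 : Matrix (Fin n) (Fin n) ℝ))
    (W : Fin m → Fin p → Fin n → ℝ) (Bb : Fin m → Fin n → ℝ)
    (σ σ' : ℝ → ℝ) (hσ : ∀ t, HasDerivAt σ (σ' t) t)
    (E : (Fin m → Fin q → Fin n → ℝ) → ℝ)
    (G : (Fin m → Fin q → Fin n → ℝ) → (Fin m → Fin q → Fin n → ℝ))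
    (hE : Differentiable ℝ E)
    (hG : ∀ X H, fderiv ℝ E X H = ∑ i, ∑ j, ∑ k, G X i j k * H i j k) :
    ∀ (U H : Fin p → Fin q → Fin n → ℝ),
      fderiv ℝ
        (fun U => E (fun i j k => σ (tprodM M W U i j k + Bb i k))) U H =
        ∑ r, ∑ s, ∑ k,
          tprodM M (ttrans W)
            (fun i j k' =>
              σ' (tprodM M W U i j k' + Bb i k') *
                G (fun i j k'' => σ (tprodM M W U i j k'' + Bb i k'')) i j k') r s k
            * H r s k := by
  intro U H
  have hlayer : HasFDerivAt (fun U i j k => σ (tprodM M W U i j k + Bb i k))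
      ((thadamardCLM fun i j k => σ' (tprodM M W U i j k + Bb i k)).comp (tprodMCLM M W)) U := by
    have hB := (tprodMCLM M W).hasFDerivAt.add_const (x := U) fun i (_ : Fin q) k => Bb i k
    exact (hasFDerivAt_entrywise hσ _).comp U hB
  have hloss : HasFDerivAt (fun U => E fun i j k => σ (tprodM M W U i j k + Bb i k))
      ((fderiv ℝ E _).comp _) U :=
    (hE _).hasFDerivAt.comp U hlayer
  rw [hloss.fderiv, ContinuousLinearMap.comp_apply, hG]
  exact (tinner_thadamard_right _ _ _).trans (tinner_tprodM hc hM _ _ _)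
end
end
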